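/- Let φ : ℝⁿ → ℝ be smooth, strictly convex, and superlinear, and even. Then ∫_{ℝⁿ×ℝⁿ} e^{-φ(t)-φ*(s)} dt ds ≥ 2^{-2n} ∫_{ℝⁿ×ℝⁿ} e^{-(1/2)(⟨x,∇φ(x)⟩ + ⟨y,∇φ(y)⟩)} det(Hess φ(x) + Hess φ(y)) dx dy. -/

import Mathlib

open MeasureTheory
open scoped ENNReal

/-- The Legendre transform of a real-valued function (real-valued supremum). -/
noncomputable def legendre {n : ℕ} (φ : EuclideanSpace ℝ (Fin n) → ℝ)
    (s : EuclideanSpace ℝ (Fin n)) : ℝ :=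
  ⨆ x, ((inner ℝ x s : ℝ) - φ x)

variable {n : ℕ}

local notation "E" => EuclideanSpace ℝ (Fin n)

lemma grad_ineq (φ : E → ℝ) (hconv : ConvexOn ℝ Set.univ φ)
    (hd : ∀ z, DifferentiableAt ℝ φ z) (x y : E) :
    (inner ℝ (gradient φ x) (y - x) : ℝ) ≤ φ y - φ x := by
  set g : ℝ → ℝ := fun t => φ (x + t • (y - x)) with hgdef
  have hc : HasDerivAt (fun t : ℝ => x + t • (y - x)) (y - x) 0 := by
    simpa using ((hasDerivAt_id (0:ℝ)).smul_const (y - x)).const_add x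
  have hgrad : HasFDerivAt φ (InnerProductSpace.toDual ℝ E (gradient φ x)) x :=
    (hd x).hasGradientAt
  have hg : HasDerivAt g ((inner ℝ (gradient φ x) (y - x) : ℝ)) 0 := by
    have hgrad' : HasFDerivAt φ (InnerProductSpace.toDual ℝ E (gradient φ x)) ((0:ℝ) • (y-x) + x) := by
      simpa using hgrad
    have hc' : HasDerivAt (fun t : ℝ => t • (y - x) + x) (y - x) 0 := by
      simpa using ((hasDerivAt_id (0:ℝ)).smul_const (y - x)).add_const x
    have := hgrad'.comp_hasDerivAt (0:ℝ) hc'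
    simp only [InnerProductSpace.toDual_apply_apply] at this
    have heq : (fun t : ℝ => t • (y - x) + x) = (fun t : ℝ => x + t • (y - x)) := by
      funext t; abel
    rw [heq] at this
    exact this
  rw [hasDerivAt_iff_tendsto_slope] at hg
  have hg' : Filter.Tendsto (slope g 0) (nhdsWithin 0 (Set.Ioi 0))
      (nhds ((inner ℝ (gradient φ x) (y - x) : ℝ))) :=
    hg.mono_left (nhdsWithin_mono 0 (fun t ht => Set.mem_compl_singleton_iff.2 (ne_of_gt ht)))
  refine le_of_tendsto hg' ?_
  filter_upwards [Ioc_mem_nhdsGT_of_mem (Set.left_mem_Ico.2 one_pos)] with t ht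
  have ht0 : (0:ℝ) < t := ht.1
  have key : φ (x + t • (y - x)) ≤ (1 - t) * φ x + t * φ y := by
    have := hconv.2 (Set.mem_univ x) (Set.mem_univ y) (by linarith [ht.2] : (0:ℝ) ≤ 1 - t)
      (le_of_lt ht0) (by ring)
    have hxy : (1 - t) • x + t • y = x + t • (y - x) := by
      rw [smul_sub, sub_smul, one_smul]; abel
    rwa [hxy] at this
  have hg0 : g 0 = φ x := by simp [hgdef]
  rw [slope_def_field]
  show (g t - g 0) / (t - 0) ≤ φ y - φ x
  rw [sub_zero, div_le_iff₀ ht0, hg0]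
  have hgt : g t = φ (x + t • (y - x)) := rfl
  nlinarith [key]

lemma grad_ineq_strict (φ : E → ℝ) (hconv : StrictConvexOn ℝ Set.univ φ)
    (hd : ∀ z, DifferentiableAt ℝ φ z) {x y : E} (hxy : x ≠ y) :
    (inner ℝ (gradient φ x) (y - x) : ℝ) < φ y - φ x := by
  have hmid := hconv.2 (Set.mem_univ x) (Set.mem_univ y) hxy
    (by norm_num : (0:ℝ) < 1/2) (by norm_num : (0:ℝ) < 1/2) (by norm_num)
  have h1 := grad_ineq φ hconv.convexOn hd x ((1/2:ℝ) • x + (1/2:ℝ) • y)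
  have heq : (1/2:ℝ) • x + (1/2:ℝ) • y - x = (1/2:ℝ) • (y - x) := by
    rw [smul_sub]; module
  rw [heq, real_inner_smul_right] at h1
  simp only [smul_eq_mul] at hmid
  linarith

lemma grad_mono (φ : E → ℝ) (hconv : StrictConvexOn ℝ Set.univ φ)
    (hd : ∀ z, DifferentiableAt ℝ φ z) {x y : E} (hxy : x ≠ y) :
    (0:ℝ) < inner ℝ (gradient φ x - gradient φ y) (x - y) := by
  have h1 := grad_ineq_strict φ hconv hd hxy
  have h2 := grad_ineq_strict φ hconv hd hxy.symm
  have e1 : (inner ℝ (gradient φ x - gradient φ y) (x - y) : ℝ)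
      = -(inner ℝ (gradient φ x) (y - x) : ℝ) - (inner ℝ (gradient φ y) (x - y) : ℝ) := by
    rw [inner_sub_left]
    have : (inner ℝ (gradient φ x) (x - y) : ℝ) = -(inner ℝ (gradient φ x) (y - x) : ℝ) := by
      rw [← inner_neg_right]; congr 1; abel
    rw [this]; try ring
  rw [e1]; linarith

lemma legendre_bound (φ : E → ℝ) (hconv : StrictConvexOn ℝ Set.univ φ)
    (hd : ∀ z, DifferentiableAt ℝ φ z) (heven : ∀ x, φ (-x) = φ x) (x y : E) :
    legendre φ ((2⁻¹:ℝ) • (gradient φ x - gradient φ y))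
      ≤ 2⁻¹ * ((inner ℝ x (gradient φ x) : ℝ) + (inner ℝ y (gradient φ y) : ℝ))
        - φ ((2⁻¹:ℝ) • (x + y)) := by
  apply ciSup_le
  intro w
  have h1 := grad_ineq φ hconv.convexOn hd x w
  have h2 := grad_ineq φ hconv.convexOn hd y (-w)
  rw [heven w] at h2
  have h3 : φ ((2⁻¹:ℝ) • (x + y)) ≤ 2⁻¹ * φ x + 2⁻¹ * φ y := by
    have := hconv.convexOn.2 (Set.mem_univ x) (Set.mem_univ y)
      (by norm_num : (0:ℝ) ≤ 2⁻¹) (by norm_num : (0:ℝ) ≤ 2⁻¹) (by norm_num)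
    simpa [smul_add, smul_eq_mul] using this
  have e1 : (inner ℝ w ((2⁻¹:ℝ) • (gradient φ x - gradient φ y)) : ℝ)
      = 2⁻¹ * ((inner ℝ w (gradient φ x) : ℝ) - (inner ℝ w (gradient φ y) : ℝ)) := by
    rw [real_inner_smul_right, inner_sub_right]
  have c1 : (inner ℝ (gradient φ x) (w - x) : ℝ)
      = (inner ℝ w (gradient φ x) : ℝ) - (inner ℝ x (gradient φ x) : ℝ) := by
    rw [inner_sub_right, real_inner_comm (gradient φ x) w, real_inner_comm (gradient φ x) x]
  have c2 : (inner ℝ (gradient φ y) (-w - y) : ℝ)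
      = -(inner ℝ w (gradient φ y) : ℝ) - (inner ℝ y (gradient φ y) : ℝ) := by
    rw [inner_sub_right, inner_neg_right, real_inner_comm (gradient φ y) w,
      real_inner_comm (gradient φ y) y]
  rw [c1] at h1; rw [c2] at h2; rw [e1]
  linarith

lemma F_inj (φ : E → ℝ) (hconv : StrictConvexOn ℝ Set.univ φ)
    (hd : ∀ z, DifferentiableAt ℝ φ z) :
    Function.Injective (fun p : E × E =>
      ((2⁻¹:ℝ) • (p.1 + p.2), (2⁻¹:ℝ) • (gradient φ p.1 - gradient φ p.2))) := by
  rintro ⟨x, y⟩ ⟨x', y'⟩ h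
  simp only [Prod.mk.injEq] at h
  obtain ⟨h1, h2⟩ := h
  have hsum : x + y = x' + y' := smul_right_injective _ (by norm_num : (2⁻¹:ℝ) ≠ 0) h1
  have hdiff : gradient φ x - gradient φ y = gradient φ x' - gradient φ y' :=
    smul_right_injective _ (by norm_num : (2⁻¹:ℝ) ≠ 0) h2
  by_cases hx : x = x'
  · subst hx
    have : y = y' := by
      have := hsum; exact add_left_cancel this
    simp [this]
  · exfalso
    have hy : y ≠ y' := by
      intro hy; apply hx; subst hy; exact add_right_cancel hsum
    have hv : x' - x = y - y' := by
      rw [sub_eq_sub_iff_add_eq_add, ← hsum]; abel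
    have hgv : gradient φ x' - gradient φ x = -(gradient φ y - gradient φ y') := by
      rw [sub_eq_sub_iff_add_eq_add] at hdiff
      rw [neg_sub, sub_eq_sub_iff_add_eq_add, ← hdiff, add_comm]
    have m1 : (0:ℝ) < inner ℝ (gradient φ x' - gradient φ x) (x' - x) :=
      grad_mono φ hconv hd (Ne.symm hx)
    have m2 : (0:ℝ) < inner ℝ (gradient φ y - gradient φ y') (y - y') :=
      grad_mono φ hconv hd hy
    rw [hgv, hv, inner_neg_left] at m1
    linarith

noncomputable def Lmap (Hx Hy : E →L[ℝ] E) : (E × E) →L[ℝ] (E × E) :=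
  ContinuousLinearMap.prod
    (((2⁻¹:ℝ) • ((ContinuousLinearMap.fst ℝ E E) + (ContinuousLinearMap.snd ℝ E E)) :
        (E × E) →L[ℝ] E))
    (((2⁻¹:ℝ) • ((Hx.comp (ContinuousLinearMap.fst ℝ E E) :
        (E × E) →L[ℝ] E) - (Hy.comp (ContinuousLinearMap.snd ℝ E E) : (E × E) →L[ℝ] E)) :
        (E × E) →L[ℝ] E))

lemma det_Lmap (Hx Hy : E →L[ℝ] E) :
    |LinearMap.det (Lmap Hx Hy).toLinearMap|
      = (4⁻¹:ℝ)^n * |LinearMap.det ((Hx + Hy : E →L[ℝ] E) : E →ₗ[ℝ] E)| := by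
  classical
  set b : Module.Basis (Fin n) ℝ E := (PiLp.basisFun 2 ℝ (Fin n)) with hb
  set B : Module.Basis (Fin n ⊕ Fin n) ℝ (E × E) := b.prod b with hB
  set X := LinearMap.toMatrix b b (Hx : E →ₗ[ℝ] E) with hX
  set Y := LinearMap.toMatrix b b (Hy : E →ₗ[ℝ] E) with hY
  have hmat : LinearMap.toMatrix B B (Lmap Hx Hy).toLinearMap
      = Matrix.fromBlocks ((2⁻¹:ℝ) • (1 : Matrix (Fin n) (Fin n) ℝ)) ((2⁻¹:ℝ) • (1 : Matrix (Fin n) (Fin n) ℝ)) ((2⁻¹:ℝ) • X) (-((2⁻¹:ℝ) • Y)) := by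
    ext i j
    rcases i with i | i <;> rcases j with j | j <;>
      simp [LinearMap.toMatrix_apply, hB, Module.Basis.prod_apply, Lmap, hX, hY,
        Matrix.one_apply, Finsupp.single_apply, eq_comm]
  rw [← LinearMap.det_toMatrix B (Lmap Hx Hy).toLinearMap, hmat]
  have hU : (Matrix.fromBlocks ((2⁻¹:ℝ) • (1 : Matrix (Fin n) (Fin n) ℝ)) ((2⁻¹:ℝ) • (1 : Matrix (Fin n) (Fin n) ℝ)) ((2⁻¹:ℝ) • X) (-((2⁻¹:ℝ) • Y))
        * Matrix.fromBlocks (1 : Matrix (Fin n) (Fin n) ℝ) (-1 : Matrix (Fin n) (Fin n) ℝ) (0 : Matrix (Fin n) (Fin n) ℝ) (1 : Matrix (Fin n) (Fin n) ℝ))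
      = Matrix.fromBlocks ((2⁻¹:ℝ) • (1 : Matrix (Fin n) (Fin n) ℝ)) (0 : Matrix (Fin n) (Fin n) ℝ) ((2⁻¹:ℝ) • X) (-((2⁻¹:ℝ) • (X + Y))) := by
    rw [Matrix.fromBlocks_multiply]
    congr 1 <;> simp [Matrix.mul_neg, smul_add, add_comm]
  have hdetU : (Matrix.fromBlocks (1 : Matrix (Fin n) (Fin n) ℝ) (-1 : Matrix (Fin n) (Fin n) ℝ) (0 : Matrix (Fin n) (Fin n) ℝ) (1 : Matrix (Fin n) (Fin n) ℝ)).det = 1 := by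
    rw [Matrix.det_fromBlocks_zero₂₁]; simp
  have hdetM : (Matrix.fromBlocks ((2⁻¹:ℝ) • (1 : Matrix (Fin n) (Fin n) ℝ)) ((2⁻¹:ℝ) • (1 : Matrix (Fin n) (Fin n) ℝ)) ((2⁻¹:ℝ) • X)
      (-((2⁻¹:ℝ) • Y))).det
      = ((2⁻¹:ℝ) • (1 : Matrix (Fin n) (Fin n) ℝ)).det * (-((2⁻¹:ℝ) • (X + Y))).det := by
    have := congrArg Matrix.det hU
    rw [Matrix.det_mul, hdetU, mul_one] at this
    rw [this, Matrix.det_fromBlocks_zero₁₂]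
  have hXY : X + Y = LinearMap.toMatrix b b ((Hx + Hy : E →L[ℝ] E) : E →ₗ[ℝ] E) := by
    rw [hX, hY, ← map_add]; rfl
  rw [hdetM, hXY]
  have d1 : ((2⁻¹:ℝ) • (1 : Matrix (Fin n) (Fin n) ℝ)).det = (2⁻¹:ℝ)^n := by
    rw [Matrix.det_smul, Matrix.det_one, mul_one]; simp
  have d2 : (-((2⁻¹:ℝ) • (LinearMap.toMatrix b b ((Hx + Hy : E →L[ℝ] E) : E →ₗ[ℝ] E)))).det
      = (-2⁻¹:ℝ)^n * LinearMap.det ((Hx + Hy : E →L[ℝ] E) : E →ₗ[ℝ] E) := by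
    rw [← neg_smul, Matrix.det_smul, LinearMap.det_toMatrix]; simp
  rw [d1, d2, abs_mul, abs_mul, abs_pow, abs_pow]
  rw [abs_neg, abs_of_nonneg (by norm_num : (0:ℝ) ≤ (2⁻¹:ℝ))]
  rw [← mul_assoc, ← mul_pow]
  norm_num

lemma gradient_contDiff (φ : E → ℝ) (hs : ContDiff ℝ (⊤ : ℕ∞) φ) : ContDiff ℝ (⊤ : ℕ∞) (gradient φ) := by
  have h1 : ContDiff ℝ (⊤ : ℕ∞) (fderiv ℝ φ) := hs.fderiv_right (by simp)
  exact ((InnerProductSpace.toDual ℝ E).symm.contDiff).comp h1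

lemma F_deriv (φ : E → ℝ) (hs : ContDiff ℝ (⊤ : ℕ∞) φ) (p : E × E) :
    HasFDerivAt (fun q : E × E =>
        ((2⁻¹:ℝ) • (q.1 + q.2), (2⁻¹:ℝ) • (gradient φ q.1 - gradient φ q.2)))
      (Lmap (fderiv ℝ (gradient φ) p.1) (fderiv ℝ (gradient φ) p.2)) p := by
  have hGc := gradient_contDiff φ hs
  have h1 : HasFDerivAt (fun q : E × E => (2⁻¹:ℝ) • (q.1 + q.2))
      ((2⁻¹:ℝ) • ((ContinuousLinearMap.fst ℝ E E) + (ContinuousLinearMap.snd ℝ E E)))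
      p := (hasFDerivAt_fst.add hasFDerivAt_snd).const_smul (2⁻¹:ℝ)
  have hg1 : HasFDerivAt (fun q : E × E => gradient φ q.1)
      ((fderiv ℝ (gradient φ) p.1).comp (ContinuousLinearMap.fst ℝ E E)) p :=
    ((hGc.differentiable (by simp) p.1).hasFDerivAt).comp p hasFDerivAt_fst
  have hg2 : HasFDerivAt (fun q : E × E => gradient φ q.2)
      ((fderiv ℝ (gradient φ) p.2).comp (ContinuousLinearMap.snd ℝ E E)) p :=
    ((hGc.differentiable (by simp) p.2).hasFDerivAt).comp p hasFDerivAt_snd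
  exact HasFDerivAt.prodMk h1 ((hg1.sub hg2).const_smul (2⁻¹:ℝ))

lemma const_eq : ((2 : ℝ≥0∞) ^ (2 * n))⁻¹ = ENNReal.ofReal ((4⁻¹:ℝ)^n) := by
  rw [ENNReal.ofReal_pow (by norm_num : (0:ℝ) ≤ 4⁻¹)]
  rw [show ((4⁻¹:ℝ)) = ((4:ℝ))⁻¹ by norm_num]
  rw [ENNReal.ofReal_inv_of_pos (by norm_num : (0:ℝ) < 4)]
  rw [← ENNReal.inv_pow, show ENNReal.ofReal (4:ℝ) = (4:ℝ≥0∞) by norm_num]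
  rw [pow_mul]
  norm_num

theorem stmt14 {n : ℕ} (φ : EuclideanSpace ℝ (Fin n) → ℝ)
    (hsmooth : ContDiff ℝ (⊤ : ℕ∞) φ)
    (hconv : StrictConvexOn ℝ Set.univ φ)
    (hsuper : Filter.Tendsto (fun x : EuclideanSpace ℝ (Fin n) => φ x / ‖x‖)
      (Filter.cocompact _) Filter.atTop)
    (heven : ∀ x, φ (-x) = φ x) :
    ((2 : ℝ≥0∞) ^ (2 * n))⁻¹ *
      ∫⁻ p : EuclideanSpace ℝ (Fin n) × EuclideanSpace ℝ (Fin n),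
        ENNReal.ofReal
          (Real.exp (-(1/2 : ℝ) * ((inner ℝ p.1 (gradient φ p.1) : ℝ)
              + (inner ℝ p.2 (gradient φ p.2) : ℝ))) *
            LinearMap.det
              (((fderiv ℝ (gradient φ) p.1 + fderiv ℝ (gradient φ) p.2 :
                EuclideanSpace ℝ (Fin n) →L[ℝ] EuclideanSpace ℝ (Fin n))) :
                EuclideanSpace ℝ (Fin n) →ₗ[ℝ] EuclideanSpace ℝ (Fin n)))
    ≤ ∫⁻ q : EuclideanSpace ℝ (Fin n) × EuclideanSpace ℝ (Fin n),
        ENNReal.ofReal (Real.exp (-(φ q.1) - legendre φ q.2)) := by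
  classical
  haveI : (volume : Measure (EuclideanSpace ℝ (Fin n) × EuclideanSpace ℝ (Fin n))).IsAddHaarMeasure :=
    MeasureTheory.Measure.prod.instIsAddHaarMeasure volume volume
  have hd : ∀ z : EuclideanSpace ℝ (Fin n), DifferentiableAt ℝ φ z :=
    fun z => hsmooth.differentiable (by simp) z
  set F : (EuclideanSpace ℝ (Fin n) × EuclideanSpace ℝ (Fin n)) → (EuclideanSpace ℝ (Fin n) × EuclideanSpace ℝ (Fin n)) := fun p =>
    ((2⁻¹:ℝ) • (p.1 + p.2), (2⁻¹:ℝ) • (gradient φ p.1 - gradient φ p.2)) with hFdef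
  set g : (EuclideanSpace ℝ (Fin n) × EuclideanSpace ℝ (Fin n)) → ℝ≥0∞ := fun q => ENNReal.ofReal (Real.exp (-(φ q.1) - legendre φ q.2))
    with hgdef
  have key := lintegral_image_eq_lintegral_abs_det_fderiv_mul (μ := volume)
    MeasurableSet.univ
    (f' := fun p => Lmap (fderiv ℝ (gradient φ) p.1) (fderiv ℝ (gradient φ) p.2))
    (fun p _ => (F_deriv φ hsmooth p).hasFDerivWithinAt)
    ((F_inj φ hconv hd).injOn) g
  have hpt : ∀ p : EuclideanSpace ℝ (Fin n) × EuclideanSpace ℝ (Fin n),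
      ((2 : ℝ≥0∞) ^ (2 * n))⁻¹ * ENNReal.ofReal
          (Real.exp (-(1/2 : ℝ) * ((inner ℝ p.1 (gradient φ p.1) : ℝ)
              + (inner ℝ p.2 (gradient φ p.2) : ℝ))) *
            LinearMap.det
              (((fderiv ℝ (gradient φ) p.1 + fderiv ℝ (gradient φ) p.2 : EuclideanSpace ℝ (Fin n) →L[ℝ] EuclideanSpace ℝ (Fin n))) :
                EuclideanSpace ℝ (Fin n) →ₗ[ℝ] EuclideanSpace ℝ (Fin n)))
        ≤ ENNReal.ofReal
            |(Lmap (fderiv ℝ (gradient φ) p.1) (fderiv ℝ (gradient φ) p.2)).det|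
          * g (F p) := by
    intro p
    set d : ℝ := LinearMap.det
      (((fderiv ℝ (gradient φ) p.1 + fderiv ℝ (gradient φ) p.2 : EuclideanSpace ℝ (Fin n) →L[ℝ] EuclideanSpace ℝ (Fin n))) : EuclideanSpace ℝ (Fin n) →ₗ[ℝ] EuclideanSpace ℝ (Fin n))
      with hddef
    set e : ℝ := Real.exp (-(1/2 : ℝ) * ((inner ℝ p.1 (gradient φ p.1) : ℝ)
        + (inner ℝ p.2 (gradient φ p.2) : ℝ))) with hedef
    have he0 : 0 ≤ e := Real.exp_nonneg _
    have h2 : ENNReal.ofReal e ≤ g (F p) := by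
      rw [hgdef]
      apply ENNReal.ofReal_le_ofReal
      apply Real.exp_le_exp.2
      have hb := legendre_bound φ hconv hd heven p.1 p.2
      have : (1/2:ℝ) = 2⁻¹ := by norm_num
      rw [this]
      simp only [hFdef]
      linarith [hb]
    calc ((2 : ℝ≥0∞) ^ (2 * n))⁻¹ * ENNReal.ofReal (e * d)
        ≤ ((2 : ℝ≥0∞) ^ (2 * n))⁻¹ * ENNReal.ofReal (e * |d|) := by
          gcongr
          exact le_abs_self d
      _ = ENNReal.ofReal ((4⁻¹:ℝ)^n) * (ENNReal.ofReal |d| * ENNReal.ofReal e) := by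
          rw [const_eq, mul_comm e _, ENNReal.ofReal_mul (abs_nonneg d)]
      _ = ENNReal.ofReal ((4⁻¹:ℝ)^n * |d|) * ENNReal.ofReal e := by
          rw [ENNReal.ofReal_mul (by positivity : (0:ℝ) ≤ (4⁻¹:ℝ)^n), mul_assoc]
      _ = ENNReal.ofReal
            |(Lmap (fderiv ℝ (gradient φ) p.1) (fderiv ℝ (gradient φ) p.2)).det|
            * ENNReal.ofReal e := by
          rw [← det_Lmap]
      _ ≤ _ := by gcongr
  calc ((2 : ℝ≥0∞) ^ (2 * n))⁻¹ * ∫⁻ p : EuclideanSpace ℝ (Fin n) × EuclideanSpace ℝ (Fin n), ENNReal.ofReal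
          (Real.exp (-(1/2 : ℝ) * ((inner ℝ p.1 (gradient φ p.1) : ℝ)
              + (inner ℝ p.2 (gradient φ p.2) : ℝ))) *
            LinearMap.det
              (((fderiv ℝ (gradient φ) p.1 + fderiv ℝ (gradient φ) p.2 : EuclideanSpace ℝ (Fin n) →L[ℝ] EuclideanSpace ℝ (Fin n))) :
                EuclideanSpace ℝ (Fin n) →ₗ[ℝ] EuclideanSpace ℝ (Fin n)))
      = ∫⁻ p : EuclideanSpace ℝ (Fin n) × EuclideanSpace ℝ (Fin n), ((2 : ℝ≥0∞) ^ (2 * n))⁻¹ * ENNReal.ofReal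
          (Real.exp (-(1/2 : ℝ) * ((inner ℝ p.1 (gradient φ p.1) : ℝ)
              + (inner ℝ p.2 (gradient φ p.2) : ℝ))) *
            LinearMap.det
              (((fderiv ℝ (gradient φ) p.1 + fderiv ℝ (gradient φ) p.2 : EuclideanSpace ℝ (Fin n) →L[ℝ] EuclideanSpace ℝ (Fin n))) :
                EuclideanSpace ℝ (Fin n) →ₗ[ℝ] EuclideanSpace ℝ (Fin n))) := by
        rw [lintegral_const_mul' _ _ (by simp : ((2 : ℝ≥0∞) ^ (2 * n))⁻¹ ≠ ⊤)]
    _ ≤ ∫⁻ p : EuclideanSpace ℝ (Fin n) × EuclideanSpace ℝ (Fin n), ENNReal.ofReal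
          |(Lmap (fderiv ℝ (gradient φ) p.1) (fderiv ℝ (gradient φ) p.2)).det|
          * g (F p) := lintegral_mono hpt
    _ = ∫⁻ p in Set.univ, ENNReal.ofReal
          |(Lmap (fderiv ℝ (gradient φ) p.1) (fderiv ℝ (gradient φ) p.2)).det|
          * g (F p) := by rw [setLIntegral_univ]
    _ = ∫⁻ q in F '' Set.univ, g q := key.symm
    _ ≤ ∫⁻ q, g q := setLIntegral_le_lintegral _ _
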